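/- arXiv:2305.04723 — 9 statements merged into one kernel-verified Lean document; each statement's English description precedes it below -/
import Mathlib

section
/- New blocks cannot be inserted between two existing blocks of a valid ledger: if l is a valid ledger of length n, i is an index with i + 1 < n, and b is a block such that the list obtained from l by inserting b at position i+1 (i.e., l.take (i+1) ++ [b] ++ l.drop (i+1)) is a valid ledger, then b equals the i-th block of l; hence no block different from all blocks of l can be inserted between two blocks of l while preserving validity. -/
/-! Since `h` is injective, the prevHash of a block determines the block before it. In the
extended ledger `l[i+1]` comes right after `b`, while in `l` it comes right after `l[i]`;
hence `b = l[i]`. -/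

/-- A block is a pair `(prevHash, data)`.  A list of blocks is a valid ledger
(w.r.t. a hash function `h` and a genesis marker `g₀`) if it is nonempty,
the first block's prevHash is `g₀`, and each later block's prevHash is the
hash of the preceding block. -/
def ValidLedger {α β : Type*} (h : α × β → α) (g₀ : α) (l : List (α × β)) : Prop :=
  ∃ hpos : 0 < l.length,
    (l[0]'hpos).1 = g₀ ∧
    ∀ i : ℕ, ∀ hi : i + 1 < l.length, (l[i + 1]'hi).1 = h (l[i]'(by omega))

theorem List.take_append_singleton_append_drop {α : Type*} (l : List α) (a : α) {n : ℕ}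
    (hn : n ≤ l.length) : l.take n ++ [a] ++ l.drop n = l.insertIdx n a := by
  induction l generalizing n with
  | nil => simp_all
  | cons x l ih =>
    cases n with
    | zero => simp
    | succ n => simp [List.insertIdx_succ_cons, ← ih (by simpa using hn)]

theorem ValidLedger.getElem_eq_of_getElem_succ_eq {α β : Type*} {h : α × β → α}
    (hinj : Function.Injective h) {g₀ g₁ : α} {l l' : List (α × β)}
    (hl : ValidLedger h g₀ l) (hl' : ValidLedger h g₁ l') {j k : ℕ}
    (hj : j + 1 < l.length) (hk : k + 1 < l'.length) (heq : l[j + 1] = l'[k + 1]) :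
    l[j] = l'[k] :=
  hinj <| (hl.2.2 j hj).symm.trans <| (congrArg Prod.fst heq).trans (hl'.2.2 k hk)

/-- Lemma 1.2: a new block cannot be inserted between two existing blocks of a
valid ledger: if inserting `b` at position `i+1` yields a valid ledger, then
`b` is just the `i`-th block of `l`. -/
theorem no_insert_block {α β : Type*} (h : α × β → α)
    (hinj : Function.Injective h) (g₀ : α)
    (l : List (α × β)) (hl : ValidLedger h g₀ l)
    (i : ℕ) (hi : i + 1 < l.length) (b : α × β)
    (hins : ValidLedger h g₀ (l.take (i + 1) ++ [b] ++ l.drop (i + 1))) :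
    b = l[i]'(by omega) := by
  rw [List.take_append_singleton_append_drop l b hi.le] at hins
  have hlen : (l.insertIdx (i + 1) b).length = l.length + 1 :=
    List.length_insertIdx_of_le_length hi.le b
  have hsucc : l[i + 1] = (l.insertIdx (i + 1) b)[i + 1 + 1] :=
    (List.getElem_insertIdx_add_succ l b (i + 1) 0 hi).symm
  calc b = (l.insertIdx (i + 1) b)[i + 1] := (List.getElem_insertIdx_self (by omega)).symm
    _ = l[i] := (hl.getElem_eq_of_getElem_succ_eq hinj hins hi (by omega) hsucc).symm
end

section
/- New blocks cannot be prepended to the start of a valid ledger: if l is a valid ledger, then for every block b the list b :: l is not a valid ledger. -/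
theorem ValidLedger.fst_getElem_succ_ne {α β : Type*} {h : α × β → α} {g₀ : α}
    {l : List (α × β)} (hl : ValidLedger h g₀ l) (hg : g₀ ∉ Set.range h) (i : ℕ)
    (hi : i + 1 < l.length) : (l[i + 1]'hi).1 ≠ g₀ := by
  obtain ⟨-, -, hchain⟩ := hl
  rw [hchain i hi]
  exact fun hgen => hg ⟨_, hgen⟩

theorem no_prepend_block_general {α β : Type*} (h : α × β → α)
    (g₀ : α) (hg : g₀ ∉ Set.range h)
    (l : List (α × β)) (hl : ValidLedger h g₀ l) (b : α × β) :
    ¬ ValidLedger h g₀ (b :: l) := by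
  obtain ⟨hpos, hgen, -⟩ := hl
  intro hbl
  exact hbl.fst_getElem_succ_ne hg 0 (Nat.succ_lt_succ hpos) hgen

/-- Lemma 1.3: no block can be prepended to the start of a valid ledger. -/
theorem no_prepend_block {α β : Type*} (h : α × β → α)
    (hinj : Function.Injective h) (g₀ : α) (hg : g₀ ∉ Set.range h)
    (l : List (α × β)) (hl : ValidLedger h g₀ l) (b : α × β) :
    ¬ ValidLedger h g₀ (b :: l) :=
  no_prepend_block_general h g₀ hg l hl b
end

section
/- Valid ledgers are append-only: for every valid ledger l, (1) for any data d : β the list l ++ [(h (l.getLast), d)] is a valid ledger (blocks can be appended); (2) for any index i with i + 1 < l.length and any block b, if inserting b at position i+1 yields a valid ledger then b equals the i-th block of l (new blocks cannot be inserted between two blocks); and (3) for every block b the list b :: l is not a valid ledger (blocks cannot be prepended). -/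
/-! A valid ledger is exactly a list whose head carries `g₀` and whose consecutive blocks are
hash-linked. A block inserted after block `i` must be linked to it and have block `i + 1` linked
to it, so `h b = h l[i]` and injectivity gives `b = l[i]`; a block prepended in front of the
genesis block would need `h b = g₀`, which is outside the range of `h`. -/

theorem List.IsChain.rel_getElem_of_insert {α : Type*} {R : α → α → Prop} {l : List α} {i : ℕ}
    (hi : i + 1 < l.length) {b : α}
    (hc : (l.take (i + 1) ++ [b] ++ l.drop (i + 1)).IsChain R) :
    R l[i] b ∧ R b l[i + 1] := by
  rw [List.isChain_append, List.isChain_append] at hc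
  obtain ⟨⟨-, -, hleft⟩, -, hright⟩ := hc
  refine ⟨hleft l[i] ?_ b rfl, hright b ?_ l[i + 1] ?_⟩
  · simp [List.getLast?_take]
  · simp
  · simp [List.head?_drop]

namespace ValidLedger

variable {α β : Type*} {h : α × β → α} {g₀ : α} {l : List (α × β)}

theorem iff_head_isChain :
    ValidLedger h g₀ l ↔
      (∃ b ∈ l.head?, b.1 = g₀) ∧ l.IsChain (fun a b => b.1 = h a) := by
  rw [List.isChain_iff_getElem]
  constructor
  · rintro ⟨hpos, h0, hchain⟩
    exact ⟨⟨l[0], by simp [List.head?_eq_getElem?, hpos], h0⟩, hchain⟩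
  · rintro ⟨⟨b, hb, h0⟩, hchain⟩
    cases l with
    | nil => simp at hb
    | cons a l =>
      obtain rfl : a = b := by simpa using hb
      exact ⟨by simp, h0, hchain⟩

theorem append_hash (hl : ValidLedger h g₀ l) (hne : l ≠ []) (d : β) :
    ValidLedger h g₀ (l ++ [(h (l.getLast hne), d)]) := by
  obtain ⟨⟨b, hb, h0⟩, hc⟩ := iff_head_isChain.1 hl
  refine iff_head_isChain.2
    ⟨⟨b, by rwa [List.head?_append_of_ne_nil _ hne], h0⟩, hc.append (.singleton _) ?_⟩
  simp [List.getLast?_eq_some_getLast hne]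

theorem eq_getElem_of_insert (hinj : Function.Injective h) (hl : ValidLedger h g₀ l) {i : ℕ}
    (hi : i + 1 < l.length) {b : α × β}
    (hb : ValidLedger h g₀ (l.take (i + 1) ++ [b] ++ l.drop (i + 1))) :
    b = l[i] := by
  obtain ⟨-, hlink⟩ := (iff_head_isChain.1 hb).2.rel_getElem_of_insert hi
  exact hinj (hlink.symm.trans ((iff_head_isChain.1 hl).2.getElem i hi))

theorem not_cons (hg : g₀ ∉ Set.range h) (hl : ValidLedger h g₀ l) (b : α × β) :
    ¬ ValidLedger h g₀ (b :: l) := fun hb => by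
  obtain ⟨⟨c, hc, h0⟩, -⟩ := iff_head_isChain.1 hl
  have hlink : c.1 = h b := (iff_head_isChain.1 hb).2.rel_head? hc
  exact hg ⟨b, hlink.symm.trans h0⟩

end ValidLedger

/-- Theorem 1: valid ledgers are append-only: blocks can be appended, cannot be
inserted between two existing blocks, and cannot be prepended. -/
theorem ledger_append_only {α β : Type*} (h : α × β → α)
    (hinj : Function.Injective h) (g₀ : α) (hg : g₀ ∉ Set.range h)
    (l : List (α × β)) (hl : ValidLedger h g₀ l) (hne : l ≠ []) :
    (∀ d : β, ValidLedger h g₀ (l ++ [(h (l.getLast hne), d)])) ∧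
    (∀ i : ℕ, ∀ hi : i + 1 < l.length, ∀ b : α × β,
      ValidLedger h g₀ (l.take (i + 1) ++ [b] ++ l.drop (i + 1)) →
      b = l[i]'(by omega)) ∧
    (∀ b : α × β, ¬ ValidLedger h g₀ (b :: l)) :=
  ⟨hl.append_hash hne, fun _ hi _ => hl.eq_getElem_of_insert hinj hi, hl.not_cons hg⟩
end

section
/- A valid ledger contains no duplicate blocks: if l is a valid ledger and i, j < l.length are indices with l.get i = l.get j, then i = j; that is, the map sending an index to the block at that index is injective. -/
def HashLinked {α β : Type*} (h : α × β → α) (l : List (α × β)) : Prop :=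
  ∀ i : ℕ, ∀ hi : i + 1 < l.length, (l[i + 1]'hi).1 = h (l[i]'(by omega))

section

variable {α β : Type*} {h : α × β → α} {l : List (α × β)}

namespace HashLinked

theorem getElem_eq_of_getElem_succ_eq (hchain : HashLinked h l) (hinj : Function.Injective h)
    {i j : ℕ} (hi : i + 1 < l.length) (hj : j + 1 < l.length) (heq : l[i + 1] = l[j + 1]) :
    l[i] = l[j] :=
  hinj <| by rw [← hchain i hi, ← hchain j hj, heq]

theorem getElem_succ_ne_getElem_zero (hchain : HashLinked h l) {g₀ : α} (hg : g₀ ∉ Set.range h)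
    (hpos : 0 < l.length) (h0 : (l[0]'hpos).1 = g₀) {j : ℕ} (hj : j + 1 < l.length) :
    l[j + 1] ≠ l[0] :=
  fun heq => hg ⟨l[j], by rw [← hchain j hj, heq, h0]⟩

end HashLinked

theorem ValidLedger.getElem_injective {g₀ : α} (hinj : Function.Injective h)
    (hg : g₀ ∉ Set.range h) (hl : ValidLedger h g₀ l) {i j : ℕ} (hi : i < l.length)
    (hj : j < l.length) (heq : l[i] = l[j]) : i = j := by
  obtain ⟨hpos, h0, hchain : HashLinked h l⟩ := hl
  induction i generalizing j with
  | zero =>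
    cases j with
    | zero => rfl
    | succ j => exact absurd heq.symm (hchain.getElem_succ_ne_getElem_zero hg hpos h0 hj)
  | succ i ih =>
    cases j with
    | zero => exact absurd heq (hchain.getElem_succ_ne_getElem_zero hg hpos h0 hi)
    | succ j =>
      exact congrArg (· + 1) <|
        ih (by omega) (by omega) (hchain.getElem_eq_of_getElem_succ_eq hinj hi hj heq)

end

/-- A valid ledger contains no duplicate blocks: the map sending an index to
the block at that index is injective. -/
theorem ledger_no_duplicates {α β : Type*} (h : α × β → α)
    (hinj : Function.Injective h) (g₀ : α) (hg : g₀ ∉ Set.range h)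
    (l : List (α × β)) (hl : ValidLedger h g₀ l) :
    Function.Injective l.get :=
  fun a b hab => Fin.ext (hl.getElem_injective hinj hg a.isLt b.isLt hab)
end

section
/- In a valid ledger the prevHash fields are pairwise distinct: if l is a valid ledger and i, j < l.length are indices such that the prevHash of the i-th block equals the prevHash of the j-th block, then i = j; in particular each hash value occurs as the prevHash field of at most one block of the ledger. -/
namespace ValidLedger

variable {α β : Type*} {h : α × β → α} {g₀ : α} {l : List (α × β)}

theorem prevHash_succ (hl : ValidLedger h g₀ l) {i : ℕ} (hi : i + 1 < l.length) :
    (l[i + 1]'hi).1 = h (l[i]'(by omega)) :=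
  hl.2.2 i hi

theorem prevHash_succ_ne_genesis (hl : ValidLedger h g₀ l) (hg : g₀ ∉ Set.range h) {i : ℕ}
    (hi : i + 1 < l.length) : (l[i + 1]'hi).1 ≠ (l[0]'(by omega)).1 := by
  rw [hl.prevHash_succ hi, hl.2.1]
  exact fun h_eq => hg ⟨_, h_eq⟩

theorem eq_of_prevHash_succ_eq (hl : ValidLedger h g₀ l) (hinj : Function.Injective h)
    {i j : ℕ} (hi : i + 1 < l.length) (hj : j + 1 < l.length)
    (heq : (l[i + 1]'hi).1 = (l[j + 1]'hj).1) : l[i]'(by omega) = l[j]'(by omega) := by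
  rw [hl.prevHash_succ hi, hl.prevHash_succ hj] at heq
  exact hinj heq

end ValidLedger

/-- In a valid ledger the prevHash fields are pairwise distinct: each hash
value occurs as the prevHash field of at most one block. -/
theorem prevHash_pairwise_distinct {α β : Type*} (h : α × β → α)
    (hinj : Function.Injective h) (g₀ : α) (hg : g₀ ∉ Set.range h)
    (l : List (α × β)) (hl : ValidLedger h g₀ l)
    (i j : ℕ) (hi : i < l.length) (hj : j < l.length)
    (heq : (l[i]'hi).1 = (l[j]'hj).1) :
    i = j := by
  induction i generalizing j with
  | zero =>
    cases j with
    | zero => rfl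
    | succ j => exact absurd heq.symm (hl.prevHash_succ_ne_genesis hg hj)
  | succ i ih =>
    cases j with
    | zero => exact absurd heq (hl.prevHash_succ_ne_genesis hg hi)
    | succ j =>
      have hblock := hl.eq_of_prevHash_succ_eq hinj hi hj heq
      rw [ih j (by omega) (by omega) (congrArg Prod.fst hblock)]
end

section
/- A block of a valid ledger determines all earlier blocks: if l and l' are valid ledgers, i < l.length, i < l'.length, and l.get i = l'.get i, then for every j ≤ i one has l.get j = l'.get j. -/
namespace ValidLedger

variable {α β : Type*} {h : α × β → α} {g₀ : α} {l l' : List (α × β)}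

theorem prevHash_getElem_succ (hl : ValidLedger h g₀ l) (j : ℕ) (hj : j + 1 < l.length) :
    (l[j + 1]'hj).1 = h (l[j]'(by omega)) :=
  hl.2.2 j hj

theorem getElem_eq_of_getElem_succ_eq_s7 (hinj : Function.Injective h)
    (hl : ValidLedger h g₀ l) (hl' : ValidLedger h g₀ l') (j : ℕ)
    (hj : j + 1 < l.length) (hj' : j + 1 < l'.length)
    (heq : l[j + 1]'hj = l'[j + 1]'hj') :
    l[j]'(by omega) = l'[j]'(by omega) :=
  hinj <| by rw [← hl.prevHash_getElem_succ j hj, ← hl'.prevHash_getElem_succ j hj', heq]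

end ValidLedger

/-- A block of a valid ledger determines all earlier blocks: if two valid
ledgers agree at index `i`, they agree at every index `j ≤ i`. -/
theorem block_determines_prefix {α β : Type*} (h : α × β → α)
    (hinj : Function.Injective h) (g₀ : α)
    (l l' : List (α × β)) (hl : ValidLedger h g₀ l) (hl' : ValidLedger h g₀ l')
    (i : ℕ) (hi : i < l.length) (hi' : i < l'.length)
    (heq : l[i]'hi = l'[i]'hi') :
    ∀ j : ℕ, ∀ hji : j ≤ i, l[j]'(by omega) = l'[j]'(by omega) := by
  intro j hji
  induction hji using Nat.decreasingInduction with
  | self => exact heq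
  | of_succ k _ ih => exact hl.getElem_eq_of_getElem_succ_eq_s7 hinj hl' k _ _ ih
end

section
/- Blocks of a valid ledger cannot be reordered: if l and l' are valid ledgers and l' is a permutation of l (i.e., l' ~ l as lists), then l' = l; in other words, there is no reordering of the blocks of a valid ledger, other than the identity, that yields a valid ledger. -/
namespace ValidLedger

variable {α β : Type*} {h : α × β → α} {g₀ : α} {l l' : List (α × β)}

theorem fst_getElem_eq_iff (hl : ValidLedger h g₀ l) (hg : g₀ ∉ Set.range h) {j : ℕ}
    (hj : j < l.length) : l[j].1 = g₀ ↔ j = 0 := by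
  obtain ⟨_, hfst, hchain⟩ := hl
  cases j with
  | zero => simpa using hfst
  | succ j => simpa using fun heq => hg ⟨_, (hchain j hj).symm.trans heq⟩

theorem eq_of_getElem_eq (hl : ValidLedger h g₀ l) (hinj : Function.Injective h)
    (hg : g₀ ∉ Set.range h) {i j : ℕ} (hi : i < l.length) (hj : j < l.length)
    (heq : l[i] = l[j]) : i = j := by
  have genesis {k : ℕ} (hk : k < l.length) := hl.fst_getElem_eq_iff hg hk
  induction i generalizing j with
  | zero => exact ((genesis hj).1 (heq ▸ (genesis hi).2 rfl)).symm
  | succ i ih =>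
    cases j with
    | zero => exact (genesis hi).1 (heq ▸ (genesis hj).2 rfl)
    | succ j =>
      obtain ⟨_, _, hchain⟩ := hl
      have hhash : h l[i] = h l[j] := by rw [← hchain i hi, ← hchain j hj, heq]
      rw [ih (by omega) (by omega) (hinj hhash)]

theorem eq_getElem_zero_of_mem (hl : ValidLedger h g₀ l) (hg : g₀ ∉ Set.range h)
    {b : α × β} (hb : b ∈ l) (hb₀ : b.1 = g₀) : b = l[0]'hl.1 := by
  obtain ⟨j, hj, rfl⟩ := List.mem_iff_getElem.1 hb
  simp only [(hl.fst_getElem_eq_iff hg hj).1 hb₀]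

theorem exists_eq_getElem_succ_of_mem (hl : ValidLedger h g₀ l) (hinj : Function.Injective h)
    (hg : g₀ ∉ Set.range h) {b : α × β} (hb : b ∈ l) {i : ℕ} (hi : i < l.length)
    (hbi : b.1 = h l[i]) : ∃ hi' : i + 1 < l.length, b = l[i + 1] := by
  obtain ⟨j, hj, rfl⟩ := List.mem_iff_getElem.1 hb
  cases j with
  | zero =>
    have h₀ : l[0].1 = g₀ := (hl.fst_getElem_eq_iff hg hj).2 rfl
    exact absurd ⟨_, hbi.symm.trans h₀⟩ hg
  | succ j =>
    have hji : l[j] = l[i] := hinj ((hl.2.2 j hj).symm.trans hbi)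
    obtain rfl := hl.eq_of_getElem_eq hinj hg (by omega) hi hji
    exact ⟨hj, rfl⟩

theorem isPrefix_of_subset (hl : ValidLedger h g₀ l) (hl' : ValidLedger h g₀ l')
    (hinj : Function.Injective h) (hg : g₀ ∉ Set.range h) (hsub : l' ⊆ l) : l' <+: l := by
  have key : ∀ i (hi : i < l'.length), ∃ hi' : i < l.length, l'[i] = l[i] := by
    intro i
    induction i with
    | zero =>
      exact fun hi => ⟨hl.1, hl.eq_getElem_zero_of_mem hg (hsub (List.getElem_mem hi)) hl'.2.1⟩
    | succ i ih =>
      intro hi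
      obtain ⟨hi', heq⟩ := ih (by omega)
      exact hl.exists_eq_getElem_succ_of_mem hinj hg (hsub (List.getElem_mem hi)) hi'
        (heq ▸ hl'.2.2 i hi)
  refine List.prefix_iff_getElem.2 ⟨?_, fun i hi => (key i hi).2⟩
  obtain ⟨hlast, -⟩ := key (l'.length - 1) (by have := hl'.1; omega)
  omega

end ValidLedger

/-- Lemma 2.1: blocks of a valid ledger cannot be reordered: any permutation of
a valid ledger that is itself a valid ledger is equal to the original ledger. -/
theorem no_reorder_blocks {α β : Type*} (h : α × β → α)
    (hinj : Function.Injective h) (g₀ : α) (hg : g₀ ∉ Set.range h)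
    (l l' : List (α × β)) (hl : ValidLedger h g₀ l) (hl' : ValidLedger h g₀ l')
    (hperm : l'.Perm l) :
    l' = l :=
  (hl.isPrefix_of_subset hl' hinj hg hperm.subset).eq_of_length hperm.length_eq
end

section
/- Transactions within a block cannot be reordered without changing the Merkle root: for every k, the Merkle root function is injective on lists of length 2^k; that is, if l and l' are lists of transactions of length 2^k with merkleRoot l = merkleRoot l', then l = l'. Consequently, if l' is a permutation of l with l' ≠ l, then merkleRoot l' ≠ merkleRoot l. -/
/-!
Combining adjacent pairs is injective on lists of even length, since `c` is injective on pairs.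
A list of length `2 ^ k` is reduced to its root by `k` rounds of pairing, so by induction on `k`
the root determines the list. A nontrivial reordering is a different list of the same length,
hence has a different root.
-/

/-- Replace each adjacent pair of entries `(x, y)` of a list by `c x y`. -/
def pairUp {α : Type*} (c : α → α → α) : List α → List α
  | x :: y :: rest => c x y :: pairUp c rest
  | _ => []

/-- The Merkle root of a list of length `2 ^ k` (with combining function `c`):
the Merkle root of a one-element list `[a]` is `a`, and the Merkle root of a
list of length `2 ^ (k + 1)` is the Merkle root of the length-`2 ^ k` list
obtained by combining adjacent pairs. -/
def merkleRoot {α : Type*} (c : α → α → α) : ℕ → List α → Option α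
  | 0, l => l.head?
  | k + 1, l => merkleRoot c k (pairUp c l)

section

variable {α : Type*} (c : α → α → α)

theorem length_pairUp : ∀ l : List α, (pairUp c l).length = l.length / 2
  | x :: y :: rest => by simp only [pairUp, List.length_cons, length_pairUp rest]; omega
  | [] | [_] => by simp [pairUp]

variable {c}

theorem pairUp_inj (hc : Function.Injective fun p : α × α => c p.1 p.2) :
    ∀ {l l' : List α}, Even l.length → Even l'.length → pairUp c l = pairUp c l' → l = l'
  | [], [], _, _, _ => rfl
  | x :: y :: rest, x' :: y' :: rest', hl, hl', h => by
    simp only [pairUp, List.cons.injEq] at h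
    obtain ⟨rfl, rfl⟩ := Prod.mk.inj (@hc (x, y) (x', y') h.1)
    have hrest : rest = rest' :=
      pairUp_inj hc (by simpa [parity_simps] using hl) (by simpa [parity_simps] using hl') h.2
    rw [hrest]
  | [_], _, hl, _, _ => by simp at hl
  | _, [_], _, hl', _ => by simp at hl'
  | [], _ :: _ :: _, _, _, h | _ :: _ :: _, [], _, _, h => by simp [pairUp] at h

theorem merkleRoot_inj (hc : Function.Injective fun p : α × α => c p.1 p.2) (k : ℕ)
    {l l' : List α} (hl : l.length = 2 ^ k) (hl' : l'.length = 2 ^ k)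
    (h : merkleRoot c k l = merkleRoot c k l') : l = l' := by
  induction k generalizing l l' with
  | zero =>
    obtain ⟨a, rfl⟩ := List.length_eq_one_iff.mp hl
    obtain ⟨b, rfl⟩ := List.length_eq_one_iff.mp hl'
    simpa [merkleRoot] using h
  | succ k ih =>
    have hpair {m : List α} (hm : m.length = 2 ^ (k + 1)) : (pairUp c m).length = 2 ^ k := by
      rw [length_pairUp, hm, pow_succ, Nat.mul_div_cancel _ two_pos]
    have heven {m : List α} (hm : m.length = 2 ^ (k + 1)) : Even m.length := by
      rw [hm, pow_succ]; exact even_two.mul_left _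
    exact pairUp_inj hc (heven hl) (heven hl') (ih (hpair hl) (hpair hl') h)

end

/-- Lemma 2.2: the Merkle root is injective on lists of length `2 ^ k`;
consequently, reordering the transactions of a block (in any nontrivial way)
changes the Merkle root. -/
theorem merkleRoot_injective {α : Type*} (c : α → α → α)
    (hc : Function.Injective fun p : α × α => c p.1 p.2) (k : ℕ) :
    (∀ l l' : List α, l.length = 2 ^ k → l'.length = 2 ^ k →
      merkleRoot c k l = merkleRoot c k l' → l = l') ∧
    (∀ l l' : List α, l.length = 2 ^ k → l'.Perm l → l' ≠ l →
      merkleRoot c k l' ≠ merkleRoot c k l) :=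
  ⟨fun _ _ hl hl' h => merkleRoot_inj hc k hl hl' h,
    fun _ _ hl hperm hne h => hne (merkleRoot_inj hc k (hperm.length_eq.trans hl) hl h)⟩
end

section
/- Modifying one block of a valid ledger forces modification of every subsequent block: if l and l' are valid ledgers of the same length n, and i < n is an index with l.get i ≠ l'.get i, then for every j with i ≤ j < n one has l.get j ≠ l'.get j; consequently the number of indices at which l and l' differ is at least n - i. -/
open Classical

/-! Since `h` is injective, the prevHash of block `k + 1` determines block `k`; so a
difference at block `k` propagates to every later block. -/

namespace ValidLedger

variable {α β : Type*} {h : α × β → α} {g₀ g₀' : α} {l l' : List (α × β)}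

theorem getElem_succ_ne (hinj : Function.Injective h)
    (hl : ValidLedger h g₀ l) (hl' : ValidLedger h g₀' l') {k : ℕ}
    (hk : k + 1 < l.length) (hk' : k + 1 < l'.length) (hne : l[k] ≠ l'[k]) :
    l[k + 1] ≠ l'[k + 1] := fun heq =>
  hne <| hinj <| by rw [← hl.2.2 k hk, ← hl'.2.2 k hk', heq]

theorem getElem_ne_of_le (hinj : Function.Injective h)
    (hl : ValidLedger h g₀ l) (hl' : ValidLedger h g₀' l') {i j : ℕ}
    (hi : i < l.length) (hi' : i < l'.length) (hne : l[i] ≠ l'[i])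
    (hij : i ≤ j) (hj : j < l.length) (hj' : j < l'.length) :
    l[j] ≠ l'[j] := by
  induction j, hij using Nat.le_induction with
  | base => exact hne
  | succ k _ ih =>
    exact getElem_succ_ne hinj hl hl' hj hj' (ih (by omega) (by omega))

end ValidLedger

theorem Finset.sub_le_card_filter_range {n i : ℕ} {p : ℕ → Prop} [DecidablePred p]
    (hp : ∀ j, i ≤ j → j < n → p j) : n - i ≤ ((range n).filter p).card := by
  rw [← Nat.card_Ico i n]
  refine card_le_card fun j hj => ?_
  rw [mem_Ico] at hj
  exact mem_filter.mpr ⟨mem_range.mpr hj.2, hp j hj.1 hj.2⟩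

/-- Core of Lemma 4.2: if two valid ledgers of the same length `n` differ at
index `i`, then they differ at every index `j` with `i ≤ j < n`; consequently
the number of indices at which they differ is at least `n - i`. -/
theorem tamper_requires_linear_changes {α β : Type*} (h : α × β → α)
    (hinj : Function.Injective h) (g₀ : α)
    (l l' : List (α × β)) (hl : ValidLedger h g₀ l) (hl' : ValidLedger h g₀ l')
    (hlen : l.length = l'.length)
    (i : ℕ) (hi : i < l.length) (hne : l[i]'hi ≠ l'[i]'(by omega)) :
    (∀ j : ℕ, ∀ hij : i ≤ j, ∀ hj : j < l.length,
      l[j]'hj ≠ l'[j]'(by omega)) ∧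
    l.length - i ≤ ((Finset.range l.length).filter (fun j => l[j]? ≠ l'[j]?)).card := by
  have hdiff : ∀ j, i ≤ j → ∀ hj : j < l.length, l[j] ≠ l'[j]'(by omega) :=
    fun j hij hj => hl.getElem_ne_of_le hinj hl' hi _ hne hij hj _
  refine ⟨hdiff, Finset.sub_le_card_filter_range fun j hij hj => ?_⟩
  rw [List.getElem?_eq_getElem hj, List.getElem?_eq_getElem (hlen ▸ hj), ne_eq, Option.some_inj]
  exact hdiff j hij hj
end
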